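/- arXiv:2212.06059 — 2 statements merged into one kernel-verified Lean document; each statement's English description precedes it below -/
import Mathlib

section
/- Let (X,d) be a proper, geodesic, non-branching metric space, let Ω ⊆ X be open with ∂Ω ≠ ∅, let ε > 0, and let δ be the signed distance from ∂Ω. For x ∈ T_δ^{nb} set C(x) = {y ∈ T_δ^{nb} : (x,y) ∈ R_δ}. Then {x ∈ Ω ∩ T_δ^{nb} : ℋ¹(C(x) ∩ Ω) ≥ ε} = O_ε ∩ T_δ^{nb}, where ℋ¹ denotes the 1-dimensional Hausdorff measure on X. -/
open Metric Set Filter MeasureTheory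

variable {X : Type*}

/-- A geodesic parameterized on `[0,1]`. -/
def IsGeodesic [MetricSpace X] (γ : ℝ → X) : Prop :=
  ∀ s ∈ Set.Icc (0:ℝ) 1, ∀ t ∈ Set.Icc (0:ℝ) 1,
    dist (γ s) (γ t) = |s - t| * dist (γ 0) (γ 1)

/-- Every pair of points is joined by a geodesic. -/
def GeodesicSpace' (X : Type*) [MetricSpace X] : Prop :=
  ∀ x y : X, ∃ γ : ℝ → X, IsGeodesic γ ∧ γ 0 = x ∧ γ 1 = y

/-- Non-branching: two geodesics agreeing on `[0,t]`, `t ∈ (0,1)`, agree on `[0,1]`. -/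
def NonBranching (X : Type*) [MetricSpace X] : Prop :=
  ∀ γ₁ γ₂ : ℝ → X, IsGeodesic γ₁ → IsGeodesic γ₂ →
    ∀ t ∈ Set.Ioo (0:ℝ) 1, (∀ s ∈ Set.Icc (0:ℝ) t, γ₁ s = γ₂ s) →
      ∀ s ∈ Set.Icc (0:ℝ) 1, γ₁ s = γ₂ s

open scoped Classical in
/-- Signed distance from the boundary of `Ω`. -/
noncomputable def signedDist' [MetricSpace X] (Ω : Set X) (x : X) : ℝ :=
  if x ∈ Ω then Metric.infDist x (frontier Ω) else -Metric.infDist x (frontier Ω)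
/-- The set `Γ_u`. -/
def Gamma [MetricSpace X] (u : X → ℝ) : Set (X × X) :=
  {p | u p.1 - u p.2 = dist p.1 p.2}

/-- The transport relation `R_u = Γ_u ∪ Γ_u⁻¹`. -/
def Ru [MetricSpace X] (u : X → ℝ) : Set (X × X) :=
  Gamma u ∪ {p | (p.2, p.1) ∈ Gamma u}

/-- The transport set `T_u`. -/
def Tu [MetricSpace X] (u : X → ℝ) : Set X :=
  {x | ∃ y, y ≠ x ∧ (x, y) ∈ Ru u}

/-- The forward branching set `A⁺`. -/
def Aplus [MetricSpace X] (u : X → ℝ) : Set X :=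
  {x ∈ Tu u | ∃ y z, (x, y) ∈ Gamma u ∧ (x, z) ∈ Gamma u ∧ (y, z) ∉ Ru u}

/-- The backward branching set `A⁻`. -/
def Aminus [MetricSpace X] (u : X → ℝ) : Set X :=
  {x ∈ Tu u | ∃ y z, (y, x) ∈ Gamma u ∧ (z, x) ∈ Gamma u ∧ (y, z) ∉ Ru u}

/-- The non-branched transport set `T_u^{nb}`. -/
def Tnb [MetricSpace X] (u : X → ℝ) : Set X :=
  Tu u \ (Aplus u ∪ Aminus u)
/-- The set `O_ε` of points covered by geodesics of length `≥ ε` minimizing the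
distance from `∂Ω`. -/
def Oeps [MetricSpace X] (Ω : Set X) (ε : ℝ) : Set X :=
  {x | x ∈ Ω ∧ ∃ γ : ℝ → X, IsGeodesic γ ∧ (∃ t ∈ Set.Icc (0:ℝ) 1, γ t = x) ∧
    γ 0 ∈ frontier Ω ∧ signedDist' Ω (γ 1) = dist (γ 0) (γ 1) ∧ ε ≤ dist (γ 0) (γ 1)}

/-- The measured interior geodesic condition of size `ε`. -/
def mIGC [MetricSpace X] [MeasurableSpace X] (μ : Measure X) (Ω : Set X) (ε : ℝ) : Prop :=
  μ ({x | 0 < signedDist' Ω x ∧ signedDist' Ω x < ε} \ Oeps Ω ε) = 0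


section Aux

variable [MetricSpace X]

lemma mem_gamma_iff {u : X → ℝ} {x y : X} : (x, y) ∈ Gamma u ↔ u x - u y = dist x y := Iff.rfl

lemma gamma_self {u : X → ℝ} (x : X) : (x, x) ∈ Gamma u := by
  simp [mem_gamma_iff]

lemma ru_symm {u : X → ℝ} {x y : X} (h : (x, y) ∈ Ru u) : (y, x) ∈ Ru u := by
  rcases h with h | h
  · exact Or.inr h
  · exact Or.inl h

lemma dist_eq_of_ru {u : X → ℝ} {x y : X} (h : (x, y) ∈ Ru u) : dist x y = |u x - u y| := by
  rcases h with h | h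
  · have h' : u x - u y = dist x y := h
    rw [← h', abs_of_nonneg (h' ▸ dist_nonneg)]
  · have h' : u y - u x = dist y x := h
    rw [dist_comm, ← h', abs_sub_comm, abs_of_nonneg (h' ▸ dist_nonneg)]

lemma gamma_trans {u : X → ℝ} (hu : ∀ p q : X, u p - u q ≤ dist p q)
    {a b c : X} (hab : (a, b) ∈ Gamma u) (hbc : (b, c) ∈ Gamma u) :
    (a, c) ∈ Gamma u ∧ dist a c = dist a b + dist b c := by
  have h1 : u a - u b = dist a b := hab
  have h2 : u b - u c = dist b c := hbc
  have h3 : u a - u c ≤ dist a c := hu a c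
  have h4 : dist a c ≤ dist a b + dist b c := dist_triangle a b c
  constructor
  · show u a - u c = dist a c
    linarith
  · linarith

lemma abs_zero_sub (s : ℝ) (hs : 0 ≤ s) : |0 - s| = s := by
  rw [abs_sub_comm, sub_zero, abs_of_nonneg hs]

lemma isGeodesic_reverse {γ : ℝ → X} (h : IsGeodesic γ) :
    IsGeodesic (fun s => γ (1 - s)) := by
  intro s hs t ht
  have h1 : (1:ℝ) - s ∈ Set.Icc (0:ℝ) 1 := ⟨by linarith [hs.2], by linarith [hs.1]⟩
  have h2 : (1:ℝ) - t ∈ Set.Icc (0:ℝ) 1 := ⟨by linarith [ht.2], by linarith [ht.1]⟩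
  simp only
  rw [h _ h1 _ h2]
  have e1 : |1 - s - (1 - t)| = |s - t| := by rw [show (1:ℝ) - s - (1 - t) = -(s - t) by ring, abs_neg]
  have e2 : dist (γ (1 - 0)) (γ (1 - 1)) = dist (γ 0) (γ 1) := by norm_num [dist_comm]
  rw [e1, e2]

lemma isGeodesic_scale {γ : ℝ → X} (h : IsGeodesic γ) {c : ℝ} (hc0 : 0 ≤ c) (hc1 : c ≤ 1) :
    IsGeodesic (fun s => γ (c * s)) := by
  intro s hs t ht
  have h1 : c * s ∈ Set.Icc (0:ℝ) 1 := ⟨mul_nonneg hc0 hs.1,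
    le_trans (mul_le_mul hc1 hs.2 hs.1 zero_le_one) (by norm_num)⟩
  have h2 : c * t ∈ Set.Icc (0:ℝ) 1 := ⟨mul_nonneg hc0 ht.1,
    le_trans (mul_le_mul hc1 ht.2 ht.1 zero_le_one) (by norm_num)⟩
  simp only
  rw [h _ h1 _ h2]
  have e0 : dist (γ (c * 0)) (γ (c * 1)) = c * dist (γ 0) (γ 1) := by
    rw [mul_zero, mul_one, h 0 ⟨le_rfl, zero_le_one⟩ c ⟨hc0, hc1⟩, abs_zero_sub c hc0]
  rw [e0, show |c * s - c * t| = c * |s - t| by rw [← mul_sub, abs_mul, abs_of_nonneg hc0]]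
  ring

lemma gamma_geodesic_segment {u : X → ℝ} (hu : ∀ p q : X, u p - u q ≤ dist p q)
    {γ : ℝ → X} (hγ : IsGeodesic γ) (h01 : (γ 0, γ 1) ∈ Gamma u)
    {s t : ℝ} (hs : s ∈ Set.Icc (0:ℝ) 1) (ht : t ∈ Set.Icc (0:ℝ) 1) (hst : s ≤ t) :
    (γ s, γ t) ∈ Gamma u := by
  set D := dist (γ 0) (γ 1) with hD
  have h0 : (0:ℝ) ∈ Set.Icc (0:ℝ) 1 := ⟨le_rfl, zero_le_one⟩
  have h1 : (1:ℝ) ∈ Set.Icc (0:ℝ) 1 := ⟨zero_le_one, le_rfl⟩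
  have e1 : dist (γ 0) (γ s) = s * D := by rw [hγ 0 h0 s hs, abs_zero_sub s hs.1]
  have e2 : dist (γ s) (γ t) = (t - s) * D := by
    rw [hγ s hs t ht, abs_of_nonpos (by linarith : s - t ≤ 0)]; simp only [hD]; ring
  have e3 : dist (γ t) (γ 1) = (1 - t) * D := by
    rw [hγ t ht 1 h1, abs_of_nonpos (by linarith [ht.2] : t - 1 ≤ 0)]; simp only [hD]; ring
  have a1 : u (γ 0) - u (γ s) ≤ s * D := e1 ▸ hu (γ 0) (γ s)
  have a2 : u (γ s) - u (γ t) ≤ (t - s) * D := e2 ▸ hu (γ s) (γ t)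
  have a3 : u (γ t) - u (γ 1) ≤ (1 - t) * D := e3 ▸ hu (γ t) (γ 1)
  have he : u (γ 0) - u (γ 1) = D := h01
  show u (γ s) - u (γ t) = dist (γ s) (γ t)
  rw [e2]
  nlinarith [a1, a2, a3, he]

end Aux

section Concat

variable [MetricSpace X]

/-- Concatenation of two geodesics at parameter `t`. -/
noncomputable def concatGeod (g h : ℝ → X) (t : ℝ) : ℝ → X :=
  fun s => if s ≤ t then g (s / t) else h ((s - t) / (1 - t))

lemma isGeodesic_concat {g h : ℝ → X} {t : ℝ} (ht0 : 0 < t) (ht1 : t < 1)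
    (hg : IsGeodesic g) (hh : IsGeodesic h) (hgh : g 1 = h 0)
    (hG : dist (g 0) (g 1) = t * dist (g 0) (h 1))
    (hH : dist (h 0) (h 1) = (1 - t) * dist (g 0) (h 1)) :
    IsGeodesic (concatGeod g h t) ∧ concatGeod g h t 0 = g 0 ∧
      concatGeod g h t 1 = h 1 ∧ concatGeod g h t t = g 1 := by
  set c := concatGeod g h t with hc
  set D := dist (g 0) (h 1) with hD
  have ht1' : (0:ℝ) < 1 - t := by linarith
  have hDnn : 0 ≤ D := dist_nonneg
  have ep0 : c 0 = g 0 := by simp [hc, concatGeod, ht0.le]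
  have ept : c t = g 1 := by simp [hc, concatGeod, le_refl, div_self ht0.ne']
  have ep1 : c 1 = h 1 := by simp [hc, concatGeod, not_le.mpr ht1, div_self ht1'.ne']
  have dgg : ∀ s ∈ Set.Icc (0:ℝ) t, ∀ s' ∈ Set.Icc (0:ℝ) t, s ≤ s' →
      dist (c s) (c s') = (s' - s) * D := by
    intro s hs s' hs' hss
    have m1 : s / t ∈ Set.Icc (0:ℝ) 1 := ⟨div_nonneg hs.1 ht0.le, (div_le_one ht0).2 hs.2⟩
    have m2 : s' / t ∈ Set.Icc (0:ℝ) 1 := ⟨div_nonneg hs'.1 ht0.le, (div_le_one ht0).2 hs'.2⟩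
    rw [show c s = g (s / t) from if_pos hs.2, show c s' = g (s' / t) from if_pos hs'.2,
      hg _ m1 _ m2, hG, abs_of_nonpos (sub_nonpos.2 ((div_le_div_iff_of_pos_right ht0).2 hss))]
    field_simp
    ring
  have dhh : ∀ s ∈ Set.Ioc t 1, ∀ s' ∈ Set.Ioc t 1, s ≤ s' →
      dist (c s) (c s') = (s' - s) * D := by
    intro s hs s' hs' hss
    have m1 : (s - t) / (1 - t) ∈ Set.Icc (0:ℝ) 1 :=
      ⟨div_nonneg (by linarith [hs.1]) ht1'.le, (div_le_one ht1').2 (by linarith [hs.2])⟩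
    have m2 : (s' - t) / (1 - t) ∈ Set.Icc (0:ℝ) 1 :=
      ⟨div_nonneg (by linarith [hs'.1]) ht1'.le, (div_le_one ht1').2 (by linarith [hs'.2])⟩
    rw [show c s = h ((s - t) / (1 - t)) from if_neg (not_le.mpr hs.1),
      show c s' = h ((s' - t) / (1 - t)) from if_neg (not_le.mpr hs'.1),
      hh _ m1 _ m2, hH,
      abs_of_nonpos (sub_nonpos.2 ((div_le_div_iff_of_pos_right ht1').2 (by linarith)))]
    field_simp
    ring
  have key : ∀ s ∈ Set.Icc (0:ℝ) 1, ∀ s' ∈ Set.Icc (0:ℝ) 1, s ≤ s' →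
      dist (c s) (c s') = (s' - s) * D := by
    intro s hs s' hs' hss
    rcases le_or_gt s' t with h2 | h2
    · exact dgg s ⟨hs.1, le_trans hss h2⟩ s' ⟨le_trans hs.1 hss, h2⟩ hss
    rcases le_or_gt s t with h1 | h1
    · -- mixed case
      have e1 : dist (c s) (g 1) = (t - s) * D := by
        have := dgg s ⟨hs.1, h1⟩ t ⟨ht0.le, le_rfl⟩ h1
        rwa [ept] at this
      have e2 : dist (g 1) (c s') = (s' - t) * D := by
        have m2 : (s' - t) / (1 - t) ∈ Set.Icc (0:ℝ) 1 :=
          ⟨div_nonneg (by linarith) ht1'.le, (div_le_one ht1').2 (by linarith [hs'.2])⟩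
        rw [show c s' = h ((s' - t) / (1 - t)) from if_neg (not_le.mpr h2), hgh,
          hh 0 ⟨le_rfl, zero_le_one⟩ _ m2, hH, abs_zero_sub _ m2.1]
        field_simp
      have hub : dist (c s) (c s') ≤ (s' - s) * D := by
        calc dist (c s) (c s') ≤ dist (c s) (g 1) + dist (g 1) (c s') := dist_triangle _ _ _
          _ = (s' - s) * D := by rw [e1, e2]; ring
      have hlb : D ≤ dist (c 0) (c s) + dist (c s) (c s') + dist (c s') (c 1) := by
        have t1 := dist_triangle (c 0) (c s) (c 1)
        have t2 := dist_triangle (c s) (c s') (c 1)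
        have : dist (c 0) (c 1) = D := by rw [ep0, ep1]
        linarith
      have e3 : dist (c 0) (c s) = s * D := by
        have := dgg 0 ⟨le_rfl, ht0.le⟩ s ⟨hs.1, h1⟩ hs.1
        simpa using this
      have e4 : dist (c s') (c 1) = (1 - s') * D := dhh s' ⟨h2, hs'.2⟩ 1 ⟨ht1, le_rfl⟩ hs'.2
      have : (s' - s) * D ≤ dist (c s) (c s') := by
        rw [e3, e4] at hlb; linarith
      linarith
    · exact dhh s ⟨h1, hs.2⟩ s' ⟨lt_of_lt_of_le h1 hss, hs'.2⟩ hss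
  refine ⟨?_, ep0, ep1, ept⟩
  intro s hs s' hs'
  have hc01 : dist (c 0) (c 1) = D := by rw [ep0, ep1]
  rcases le_total s s' with hss | hss
  · rw [key s hs s' hs' hss, hc01, abs_of_nonpos (by linarith), neg_sub]
  · rw [dist_comm, key s' hs' s hs hss, hc01, abs_of_nonneg (by linarith), ]

end Concat

section Branch

variable [MetricSpace X]

lemma gamma_neg_iff {u : X → ℝ} {x y : X} :
    (x, y) ∈ Gamma (fun p => -u p) ↔ (y, x) ∈ Gamma u := by
  simp only [mem_gamma_iff]
  rw [dist_comm]
  constructor <;> intro h <;> linarith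

lemma ru_neg_iff {u : X → ℝ} {x y : X} :
    (x, y) ∈ Ru (fun p => -u p) ↔ (x, y) ∈ Ru u := by
  constructor <;> rintro (h | h)
  · exact Or.inr (gamma_neg_iff.1 h)
  · exact Or.inl (gamma_neg_iff.1 h)
  · exact Or.inr (gamma_neg_iff.2 h)
  · exact Or.inl (gamma_neg_iff.2 h)

/-- Key lemma: in a non-branching geodesic space, two points in the forward cone of `a`
are comparable, provided `a` has a point strictly behind it. -/
lemma no_forward_branch (hgeo : GeodesicSpace' X) (hnb : NonBranching X)
    {u : X → ℝ} (hu : ∀ p q : X, u p - u q ≤ dist p q)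
    {a b y z : X} (hba : (b, a) ∈ Gamma u) (hne : b ≠ a)
    (hay : (a, y) ∈ Gamma u) (haz : (a, z) ∈ Gamma u) : (y, z) ∈ Ru u := by
  rcases eq_or_ne y a with rfl | hy
  · exact Or.inl haz
  rcases eq_or_ne z a with rfl | hz
  · exact Or.inr hay
  -- main case
  have key : ∀ y z : X, (a, y) ∈ Gamma u → (a, z) ∈ Gamma u → y ≠ a → z ≠ a →
      dist b y ≤ dist b z → (y, z) ∈ Gamma u := by
    clear hay haz hy hz y z
    intro y z hay haz hy hz hle
    have dab : 0 < dist b a := dist_pos.2 hne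
    have day : 0 < dist a y := dist_pos.2 (Ne.symm hy)
    have daz : 0 < dist a z := dist_pos.2 (Ne.symm hz)
    obtain ⟨hby, eby⟩ := gamma_trans hu hba hay
    obtain ⟨hbz, ebz⟩ := gamma_trans hu hba haz
    have dby : 0 < dist b y := by rw [eby]; positivity
    have dbz : 0 < dist b z := by rw [ebz]; positivity
    obtain ⟨g0, hg0, hg00, hg01⟩ := hgeo b a
    obtain ⟨g1, hg1, hg10, hg11⟩ := hgeo a y
    obtain ⟨g2, hg2, hg20, hg21⟩ := hgeo a z
    set t1 := dist b a / dist b y with ht1def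
    set t2 := dist b a / dist b z with ht2def
    have ht10 : 0 < t1 := div_pos dab dby
    have ht11 : t1 < 1 := (div_lt_one dby).2 (by rw [eby]; linarith)
    have ht20 : 0 < t2 := div_pos dab dbz
    have ht21 : t2 < 1 := (div_lt_one dbz).2 (by rw [ebz]; linarith)
    have hd0y : dist (g0 0) (g1 1) = dist b y := by rw [hg00, hg11]
    have hd0z : dist (g0 0) (g2 1) = dist b z := by rw [hg00, hg21]
    have hGy : dist (g0 0) (g0 1) = t1 * dist (g0 0) (g1 1) := by
      rw [hg00, hg01, hg11, ht1def]; field_simp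
    have hHy : dist (g1 0) (g1 1) = (1 - t1) * dist (g0 0) (g1 1) := by
      rw [hg10, hg11, hg00, ht1def]
      have : (1 - dist b a / dist b y) * dist b y = dist b y - dist b a := by field_simp
      rw [this, eby]; ring
    have hGz : dist (g0 0) (g0 1) = t2 * dist (g0 0) (g2 1) := by
      rw [hg00, hg01, hg21, ht2def]; field_simp
    have hHz : dist (g2 0) (g2 1) = (1 - t2) * dist (g0 0) (g2 1) := by
      rw [hg20, hg21, hg00, ht2def]
      have : (1 - dist b a / dist b z) * dist b z = dist b z - dist b a := by field_simp
      rw [this, ebz]; ring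
    obtain ⟨hgeo1, e10, e11, e1t⟩ := isGeodesic_concat ht10 ht11 hg0 hg1
      (by rw [hg01, hg10]) hGy hHy
    obtain ⟨hgeo2, e20, e21, e2t⟩ := isGeodesic_concat ht20 ht21 hg0 hg2
      (by rw [hg01, hg20]) hGz hHz
    set c1 := concatGeod g0 g1 t1
    set c2 := concatGeod g0 g2 t2
    set r := dist b y / dist b z with hrdef
    have hr0 : 0 < r := div_pos dby dbz
    have hr1 : r ≤ 1 := (div_le_one dbz).2 hle
    have hgeo2' : IsGeodesic (fun s => c2 (r * s)) := isGeodesic_scale hgeo2 hr0.le hr1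
    have hagree : ∀ s ∈ Set.Icc (0:ℝ) t1, c1 s = (fun s => c2 (r * s)) s := by
      intro s hs
      have hb1 : c1 s = g0 (s / t1) := if_pos hs.2
      have hrs : r * s ≤ t2 := by
        have hnum : dist b y * s ≤ dist b a := by
          rw [mul_comm]
          exact (le_div_iff₀ dby).1 hs.2
        rw [ht2def, hrdef, div_mul_eq_mul_div]
        gcongr
      have hb2 : c2 (r * s) = g0 (r * s / t2) := if_pos hrs
      have harg : s / t1 = r * s / t2 := by
        rw [ht1def, ht2def, hrdef]
        field_simp
      simp only [hb1, hb2, harg]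
    have hnbres := hnb c1 (fun s => c2 (r * s)) hgeo1 hgeo2' t1 ⟨ht10, ht11⟩ hagree
      1 ⟨zero_le_one, le_rfl⟩
    -- c1 1 = y, so y = c2 r
    have hnbres' : c1 1 = c2 (r * 1) := hnbres
    have hy' : y = c2 (r * 1) := by rw [← hnbres', e11, hg11]
    rw [mul_one] at hy'
    -- (c2 r, c2 1) ∈ Gamma u by the segment lemma
    have hseg : (c2 r, c2 1) ∈ Gamma u := by
      apply gamma_geodesic_segment hu hgeo2 _ ⟨hr0.le, hr1⟩ ⟨zero_le_one, le_rfl⟩ hr1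
      rw [e20, e21, hg00, hg21]
      exact hbz
    rw [← hy', e21, hg21] at hseg
    exact hseg
  rcases le_total (dist b y) (dist b z) with hle | hle
  · exact Or.inl (key y z hay haz hy hz hle)
  · exact Or.inr (key z y haz hay hz hy hle)

lemma no_backward_branch (hgeo : GeodesicSpace' X) (hnb : NonBranching X)
    {u : X → ℝ} (hu : ∀ p q : X, u p - u q ≤ dist p q)
    {a c y z : X} (hac : (a, c) ∈ Gamma u) (hne : c ≠ a)
    (hya : (y, a) ∈ Gamma u) (hza : (z, a) ∈ Gamma u) : (y, z) ∈ Ru u := by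
  have hu' : ∀ p q : X, (fun x => -u x) p - (fun x => -u x) q ≤ dist p q := by
    intro p q
    simp only
    rw [dist_comm]
    linarith [hu q p]
  exact ru_neg_iff.1 (no_forward_branch hgeo hnb hu'
    (gamma_neg_iff.2 hac) hne (gamma_neg_iff.2 hya) (gamma_neg_iff.2 hza))

end Branch

section SignedDist

variable [MetricSpace X] {Ω : Set X}

lemma signedDist_of_mem (hx : x ∈ Ω) : signedDist' Ω x = Metric.infDist x (frontier Ω) :=
  if_pos hx

lemma signedDist_of_not_mem (hx : x ∉ Ω) : signedDist' Ω x = -Metric.infDist x (frontier Ω) :=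
  if_neg hx

lemma signedDist_frontier (hΩ : IsOpen Ω) {p : X} (hp : p ∈ frontier Ω) :
    signedDist' Ω p = 0 := by
  have hpΩ : p ∉ Ω := by
    intro h
    exact hp.2 (by rwa [hΩ.interior_eq])
  rw [signedDist_of_not_mem hpΩ, Metric.infDist_zero_of_mem hp, neg_zero]

lemma signedDist_pos (hΩ : IsOpen Ω) (hfr : (frontier Ω).Nonempty) {x : X} (hx : x ∈ Ω) :
    0 < signedDist' Ω x := by
  rw [signedDist_of_mem hx]
  rw [← isClosed_frontier.notMem_iff_infDist_pos hfr]
  intro h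
  exact h.2 (by rwa [hΩ.interior_eq])

lemma mem_of_signedDist_pos {x : X} (h : 0 < signedDist' Ω x) : x ∈ Ω := by
  by_contra hx
  rw [signedDist_of_not_mem hx] at h
  linarith [Metric.infDist_nonneg (s := frontier Ω) (x := x)]

lemma exists_frontier_on_geod (hΩ : IsOpen Ω) {γ : ℝ → X} (hg : IsGeodesic γ)
    (h0 : γ 0 ∈ Ω) (h1 : γ 1 ∉ Ω) :
    ∃ s ∈ Set.Icc (0:ℝ) 1, γ s ∈ frontier Ω := by
  set D := dist (γ 0) (γ 1) with hD
  have hD0 : 0 < D := dist_pos.2 (fun h => h1 (h ▸ h0))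
  set S := {s | s ∈ Set.Icc (0:ℝ) 1 ∧ γ s ∈ Ω} with hS
  have h0S : (0:ℝ) ∈ S := ⟨⟨le_rfl, zero_le_one⟩, h0⟩
  have hne : S.Nonempty := ⟨0, h0S⟩
  have hbdd : BddAbove S := ⟨1, fun s hs => hs.1.2⟩
  set s₀ := sSup S with hs₀
  have hs₀0 : 0 ≤ s₀ := le_csSup hbdd h0S
  have hs₀1 : s₀ ≤ 1 := csSup_le hne (fun s hs => hs.1.2)
  have hs₀I : s₀ ∈ Set.Icc (0:ℝ) 1 := ⟨hs₀0, hs₀1⟩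
  refine ⟨s₀, hs₀I, ?_, ?_⟩
  · -- γ s₀ ∈ closure Ω
    rw [Metric.mem_closure_iff]
    intro ε' hε'
    obtain ⟨s, hsS, hs⟩ := exists_lt_of_lt_csSup hne (show s₀ - ε' / D < sSup S by
      rw [← hs₀]; linarith [div_pos hε' hD0])
    refine ⟨γ s, hsS.2, ?_⟩
    have hss₀ : s ≤ s₀ := le_csSup hbdd hsS
    have : dist (γ s₀) (γ s) = (s₀ - s) * D := by
      rw [hg s₀ hs₀I s hsS.1, abs_of_nonneg (by linarith)]
    rw [this]
    calc (s₀ - s) * D < ε' / D * D := by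
          apply mul_lt_mul_of_pos_right _ hD0
          linarith
      _ = ε' := by field_simp
  · -- γ s₀ ∉ interior Ω
    rw [hΩ.interior_eq]
    intro hmem
    obtain ⟨r, hr, hball⟩ := Metric.isOpen_iff.1 hΩ (γ s₀) hmem
    have hs₀lt1 : s₀ < 1 := by
      rcases lt_or_eq_of_le hs₀1 with h | h
      · exact h
      · exact absurd (h ▸ hmem) h1
    set η := min (1 - s₀) (r / (2 * D)) with hη
    have hη0 : 0 < η := lt_min (by linarith) (div_pos hr (by linarith))
    have hmem' : s₀ + η ∈ S := by
      refine ⟨⟨by linarith, by linarith [min_le_left (1 - s₀) (r / (2 * D))]⟩, ?_⟩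
      apply hball
      rw [Metric.mem_ball]
      have : dist (γ (s₀ + η)) (γ s₀) = η * D := by
        rw [hg (s₀ + η) ⟨by linarith, by linarith [min_le_left (1 - s₀) (r / (2 * D))]⟩
          s₀ hs₀I, abs_of_nonneg (by linarith : (0:ℝ) ≤ s₀ + η - s₀)]
        simp only [hD]; ring
      rw [this]
      calc η * D ≤ r / (2 * D) * D := by
            apply mul_le_mul_of_nonneg_right (min_le_right _ _) hD0.le
        _ = r / 2 := by field_simp
        _ < r := by linarith
    linarith [le_csSup hbdd hmem']

lemma signedDist_lip (hgeo : GeodesicSpace' X) (hΩ : IsOpen Ω) :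
    ∀ p q : X, signedDist' Ω p - signedDist' Ω q ≤ dist p q := by
  intro p q
  by_cases hp : p ∈ Ω <;> by_cases hq : q ∈ Ω
  · rw [signedDist_of_mem hp, signedDist_of_mem hq]
    linarith [Metric.infDist_le_infDist_add_dist (x := p) (y := q) (s := frontier Ω),
      dist_comm p q]
  · -- p ∈ Ω, q ∉ Ω : the crossing case
    rw [signedDist_of_mem hp, signedDist_of_not_mem hq]
    obtain ⟨γ, hg, hg0, hg1⟩ := hgeo p q
    obtain ⟨s, hsI, hsF⟩ := exists_frontier_on_geod hΩ hg (hg0 ▸ hp) (hg1 ▸ hq)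
    have e1 : Metric.infDist p (frontier Ω) ≤ s * dist p q := by
      have := Metric.infDist_le_dist_of_mem (x := p) hsF
      calc Metric.infDist p (frontier Ω) ≤ dist p (γ s) := this
        _ = s * dist p q := by
          rw [← hg0]
          rw [show dist (γ 0) (γ s) = |0 - s| * dist (γ 0) (γ 1) from
            hg 0 ⟨le_rfl, zero_le_one⟩ s hsI, abs_zero_sub s hsI.1, hg0, hg1]
    have e2 : Metric.infDist q (frontier Ω) ≤ (1 - s) * dist p q := by
      have := Metric.infDist_le_dist_of_mem (x := q) hsF
      calc Metric.infDist q (frontier Ω) ≤ dist q (γ s) := this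
        _ = (1 - s) * dist p q := by
          rw [← hg1, dist_comm]
          rw [show dist (γ s) (γ 1) = |s - 1| * dist (γ 0) (γ 1) from
            hg s hsI 1 ⟨zero_le_one, le_rfl⟩,
            abs_of_nonpos (by linarith [hsI.2] : s - 1 ≤ 0), hg0, hg1]
          ring_nf
    linarith
  · rw [signedDist_of_not_mem hp, signedDist_of_mem hq]
    linarith [Metric.infDist_nonneg (s := frontier Ω) (x := p),
      Metric.infDist_nonneg (s := frontier Ω) (x := q), dist_nonneg (x := p) (y := q)]
  · rw [signedDist_of_not_mem hp, signedDist_of_not_mem hq]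
    linarith [Metric.infDist_le_infDist_add_dist (x := q) (y := p) (s := frontier Ω),
      dist_comm p q]

lemma signedDist_lipschitzWith (hgeo : GeodesicSpace' X) (hΩ : IsOpen Ω) :
    LipschitzWith 1 (signedDist' Ω) := by
  apply LipschitzWith.of_dist_le_mul
  intro p q
  rw [NNReal.coe_one, one_mul, Real.dist_eq, abs_sub_le_iff]
  exact ⟨signedDist_lip hgeo hΩ p q, by rw [dist_comm]; exact signedDist_lip hgeo hΩ q p⟩

lemma isClosed_ru (hgeo : GeodesicSpace' X) (hΩ : IsOpen Ω) :
    IsClosed (Ru (signedDist' Ω)) := by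
  have hc : Continuous (signedDist' Ω) := (signedDist_lipschitzWith hgeo hΩ).continuous
  have h1 : IsClosed (Gamma (signedDist' Ω) : Set (X × X)) := by
    apply isClosed_eq
    · exact (hc.comp continuous_fst).sub (hc.comp continuous_snd)
    · exact continuous_dist
  have h2 : IsClosed {p : X × X | (p.2, p.1) ∈ Gamma (signedDist' Ω)} := by
    apply isClosed_eq
    · exact (hc.comp continuous_snd).sub (hc.comp continuous_fst)
    · exact continuous_dist.comp (continuous_snd.prodMk continuous_fst)
  exact h1.union h2

end SignedDist

section Main

variable [MetricSpace X]

lemma ru_of_mem_class {u : X → ℝ} (hu : ∀ p q : X, u p - u q ≤ dist p q)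
    {x y z : X} (hx : x ∈ Tnb u) (hy : (x, y) ∈ Ru u) (hz : (x, z) ∈ Ru u) :
    (y, z) ∈ Ru u := by
  obtain ⟨hxT, hxA⟩ := hx
  rw [Set.mem_union] at hxA
  push_neg at hxA
  rcases hy with hy | hy <;> rcases hz with hz | hz
  · by_contra h
    exact hxA.1 ⟨hxT, y, z, hy, hz, h⟩
  · exact ru_symm (Or.inl (gamma_trans hu hz hy).1)
  · exact Or.inl (gamma_trans hu hy hz).1
  · by_contra h
    exact hxA.2 ⟨hxT, y, z, hy, hz, h⟩

end Main

/-- the points of `Ω ∩ T_δ^{nb}` whose transport ray has length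
`≥ ε` inside `Ω` are exactly `O_ε ∩ T_δ^{nb}`. -/
theorem transport_ray_length_eq_Oeps
    [MetricSpace X] [ProperSpace X] [MeasurableSpace X] [BorelSpace X]
    (hgeo : GeodesicSpace' X) (hnb : NonBranching X)
    (Ω : Set X) (hΩ : IsOpen Ω) (hfr : (frontier Ω).Nonempty)
    (ε : ℝ) (hε : 0 < ε) :
    {x ∈ Ω ∩ Tnb (signedDist' Ω) |
        ENNReal.ofReal ε ≤
          MeasureTheory.Measure.hausdorffMeasure 1
            ({y ∈ Tnb (signedDist' Ω) | (x, y) ∈ Ru (signedDist' Ω)} ∩ Ω)} =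
      Oeps Ω ε ∩ Tnb (signedDist' Ω) := by
  set δ := signedDist' Ω with hδdef
  have hu : ∀ p q : X, δ p - δ q ≤ dist p q := signedDist_lip hgeo hΩ
  have hcont : Continuous δ := (signedDist_lipschitzWith hgeo hΩ).continuous
  ext x
  simp only [Set.mem_sep_iff, Set.mem_inter_iff]
  constructor
  · rintro ⟨⟨hxΩ, hxnb⟩, hmeas⟩
    refine ⟨?_, hxnb⟩
    set C := {y ∈ Tnb δ | (x, y) ∈ Ru δ} ∩ Ω with hCdef
    have hpair : ∀ y ∈ C, ∀ z ∈ C, dist y z = |δ y - δ z| := by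
      intro y hy z hz
      exact dist_eq_of_ru (ru_of_mem_class hu hxnb hy.1.2 hz.1.2)
    have hxC : x ∈ C := ⟨⟨hxnb, Or.inl (gamma_self x)⟩, hxΩ⟩
    set A := δ '' C with hAdef
    have hxA : δ x ∈ A := Set.mem_image_of_mem δ hxC
    -- ℋ¹ C ≤ volume A
    have hCA : MeasureTheory.Measure.hausdorffMeasure 1 C ≤ volume A := by
      have hXne : Nonempty X := ⟨x⟩
      set g := Function.invFunOn δ C with hgdef
      have hginv : ∀ y ∈ C, g (δ y) = y := by
        intro y hy
        have h1 : g (δ y) ∈ C := Function.invFunOn_mem ⟨y, hy, rfl⟩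
        have h2 : δ (g (δ y)) = δ y := Function.invFunOn_eq ⟨y, hy, rfl⟩
        apply eq_of_dist_eq_zero
        rw [hpair _ h1 _ hy, h2, sub_self, abs_zero]
      have hsub : C ⊆ g '' A := by
        intro y hy
        exact ⟨δ y, Set.mem_image_of_mem δ hy, hginv y hy⟩
      have hlip : LipschitzOnWith 1 g A := by
        apply LipschitzOnWith.of_dist_le_mul
        rintro r ⟨y, hy, rfl⟩ r' ⟨y', hy', rfl⟩
        rw [hginv y hy, hginv y' hy', NNReal.coe_one, one_mul, Real.dist_eq,
          hpair y hy y' hy']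
      calc MeasureTheory.Measure.hausdorffMeasure 1 C
          ≤ MeasureTheory.Measure.hausdorffMeasure 1 (g '' A) := measure_mono hsub
        _ ≤ MeasureTheory.Measure.hausdorffMeasure 1 A := by
            simpa using hlip.hausdorffMeasure_image_le zero_le_one
        _ = volume A := by rw [MeasureTheory.hausdorffMeasure_real]
    have hvol : ENNReal.ofReal ε ≤ volume A := le_trans hmeas hCA
    have hApos : ∀ r ∈ A, 0 < r := by
      rintro r ⟨y, hy, rfl⟩
      exact signedDist_pos hΩ hfr hy.2
    -- find z with (x,z) ∈ Ru δ, δ x ≤ δ z, ε ≤ δ z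
    obtain ⟨z, hRxz, hxz, hεz⟩ : ∃ z, (x, z) ∈ Ru δ ∧ δ x ≤ δ z ∧ ε ≤ δ z := by
      by_cases hbdd : BddAbove A
      · have hxb : δ x ≤ sSup A := le_csSup hbdd hxA
        have hδxpos : 0 < δ x := hApos _ hxA
        have hb0 : 0 < sSup A := lt_of_lt_of_le hδxpos hxb
        have hsubI : A ⊆ Set.Icc 0 (sSup A) := fun r hr =>
          ⟨(hApos r hr).le, le_csSup hbdd hr⟩
        have hεb : ε ≤ sSup A := by
          have h1 : volume A ≤ volume (Set.Icc 0 (sSup A)) := measure_mono hsubI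
          rw [Real.volume_Icc, sub_zero] at h1
          exact (ENNReal.ofReal_le_ofReal_iff hb0.le).1 (le_trans hvol h1)
        have hKeq : {y : X | (x, y) ∈ Ru δ ∧ δ x ≤ δ y ∧ δ y ≤ sSup A} =
            {y : X | (x, y) ∈ Ru δ} ∩ ({y : X | δ x ≤ δ y} ∩ {y : X | δ y ≤ sSup A}) := rfl
        have hKclosed : IsClosed {y : X | (x, y) ∈ Ru δ ∧ δ x ≤ δ y ∧ δ y ≤ sSup A} := by
          rw [hKeq]
          refine IsClosed.inter ?_ (IsClosed.inter ?_ ?_)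
          · exact (isClosed_ru hgeo hΩ).preimage
              (Continuous.prodMk continuous_const continuous_id)
          · exact isClosed_le continuous_const hcont
          · exact isClosed_le hcont continuous_const
        have hKbd : Bornology.IsBounded
            {y : X | (x, y) ∈ Ru δ ∧ δ x ≤ δ y ∧ δ y ≤ sSup A} := by
          apply Bornology.IsBounded.subset (Metric.isBounded_closedBall (x := x) (r := sSup A))
          intro y hy
          have hd : dist x y = |δ x - δ y| := dist_eq_of_ru hy.1
          rw [Metric.mem_closedBall, dist_comm, hd,
            abs_of_nonpos (by linarith [hy.2.1])]
          linarith [hy.2.2]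
        have hKcpt : IsCompact {y : X | (x, y) ∈ Ru δ ∧ δ x ≤ δ y ∧ δ y ≤ sSup A} :=
          Metric.isCompact_of_isClosed_isBounded hKclosed hKbd
        have hKne : {y : X | (x, y) ∈ Ru δ ∧ δ x ≤ δ y ∧ δ y ≤ sSup A}.Nonempty :=
          ⟨x, Or.inl (gamma_self x), le_rfl, hxb⟩
        obtain ⟨z, hzK, hzmax⟩ := hKcpt.exists_isMaxOn hKne hcont.continuousOn
        refine ⟨z, hzK.1, hzK.2.1, ?_⟩
        by_contra hlt
        push_neg at hlt
        obtain ⟨r, hrA, hzr⟩ := exists_lt_of_lt_csSup ⟨δ x, hxA⟩ (lt_of_lt_of_le hlt hεb)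
        obtain ⟨y, hyC, rfl⟩ := hrA
        have hyK : y ∈ {y : X | (x, y) ∈ Ru δ ∧ δ x ≤ δ y ∧ δ y ≤ sSup A} :=
          ⟨hyC.1.2, le_trans hzK.2.1 hzr.le, le_csSup hbdd ⟨y, hyC, rfl⟩⟩
        exact absurd (isMaxOn_iff.1 hzmax y hyK) (not_le.mpr hzr)
      · obtain ⟨r, hrA, hgt⟩ := not_bddAbove_iff.1 hbdd (max ε (δ x))
        obtain ⟨y, hyC, rfl⟩ := hrA
        exact ⟨y, hyC.1.2, ((le_max_right ε (δ x)).trans hgt.le),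
          ((le_max_left ε (δ x)).trans hgt.le)⟩
    -- (z, x) ∈ Gamma δ
    have hzx : (z, x) ∈ Gamma δ := by
      rcases hRxz with h | h
      · have h' : δ x - δ z = dist x z := h
        have h0 : dist x z = 0 := le_antisymm (by linarith) dist_nonneg
        rw [eq_of_dist_eq_zero h0]
        exact gamma_self z
      · exact h
    -- foot point
    obtain ⟨p, hpF, hpd⟩ := isClosed_frontier.exists_infDist_eq_dist hfr x
    have hδx : δ x = dist x p := by rw [hδdef, signedDist_of_mem hxΩ, hpd]
    have hδp : δ p = 0 := signedDist_frontier hΩ hpF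
    have hxp : (x, p) ∈ Gamma δ := by
      show δ x - δ p = dist x p
      rw [hδp, hδx, sub_zero]
    have hppos : 0 < dist x p := by
      rw [← hδx]; exact signedDist_pos hΩ hfr hxΩ
    obtain ⟨hzp, ezp⟩ := gamma_trans hu hzx hxp
    have hδz : δ z = dist z p := by
      have h' : δ z - δ p = dist z p := hzp
      linarith
    rcases eq_or_ne z x with rfl | hzne
    · -- z = x : single geodesic from p to x
      obtain ⟨γ, hγ, hγ0, hγ1⟩ := hgeo p z
      refine ⟨hxΩ, γ, hγ, ⟨1, ⟨zero_le_one, le_rfl⟩, hγ1⟩, by rwa [hγ0], ?_, ?_⟩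
      · rw [hγ0, hγ1, ← hδdef, dist_comm p z, ← hδx]
      · rw [hγ0, hγ1, dist_comm p z, ← hδx]
        exact hεz
    · -- z ≠ x : concatenate p → x → z
      have hdxz : 0 < dist x z := dist_pos.2 (fun h => hzne (h.symm))
      have hpx : 0 < dist p x := by rw [dist_comm]; exact hppos
      have hdpz : dist p z = dist p x + dist x z := by
        rw [dist_comm z x, dist_comm z p] at ezp
        rw [ezp, dist_comm p x]
        ring
      have hD0 : 0 < dist p z := by rw [hdpz]; positivity
      have ht0 : 0 < dist p x / dist p z := div_pos hpx hD0
      have ht1 : dist p x / dist p z < 1 := (div_lt_one hD0).2 (by rw [hdpz]; linarith)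
      obtain ⟨g, hg, hg0, hg1⟩ := hgeo p x
      obtain ⟨h, hh, hh0, hh1⟩ := hgeo x z
      have hG : dist (g 0) (g 1) = dist p x / dist p z * dist (g 0) (h 1) := by
        rw [hg0, hg1, hh1]
        field_simp
      have hH : dist (h 0) (h 1) = (1 - dist p x / dist p z) * dist (g 0) (h 1) := by
        rw [hh0, hh1, hg0]
        have e : (1 - dist p x / dist p z) * dist p z = dist p z - dist p x := by
          field_simp
        rw [e, hdpz]
        ring
      obtain ⟨hcgeo, ec0, ec1, ect⟩ := isGeodesic_concat ht0 ht1 hg hh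
        (by rw [hg1, hh0]) hG hH
      refine ⟨hxΩ, concatGeod g h (dist p x / dist p z), hcgeo,
        ⟨dist p x / dist p z, ⟨ht0.le, ht1.le⟩, by rw [ect, hg1]⟩,
        by rw [ec0, hg0]; exact hpF, ?_, ?_⟩
      · rw [ec0, ec1, hg0, hh1, ← hδdef, hδz, dist_comm z p]
      · rw [ec0, ec1, hg0, hh1, dist_comm p z, ← hδz]
        exact hεz
  · rintro ⟨⟨hxΩ, γ, hγ, ⟨t, htI, hγt⟩, hγ0F, hγ1, hεD⟩, hxnb⟩
    refine ⟨⟨hxΩ, hxnb⟩, ?_⟩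
    have hγ1' : δ (γ 1) = dist (γ 0) (γ 1) := hγ1
    have hδ0 : δ (γ 0) = 0 := signedDist_frontier hΩ hγ0F
    have hD0 : 0 < dist (γ 0) (γ 1) := lt_of_lt_of_le hε hεD
    have h0I : (0:ℝ) ∈ Set.Icc (0:ℝ) 1 := ⟨le_rfl, zero_le_one⟩
    have h1I : (1:ℝ) ∈ Set.Icc (0:ℝ) 1 := ⟨zero_le_one, le_rfl⟩
    have hΓ10 : (γ 1, γ 0) ∈ Gamma δ := by
      show δ (γ 1) - δ (γ 0) = dist (γ 1) (γ 0)
      rw [hδ0, sub_zero, dist_comm]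
      exact hγ1'
    have hbar : ∀ s ∈ Set.Icc (0:ℝ) 1, ∀ r ∈ Set.Icc (0:ℝ) 1, s ≤ r →
        (γ r, γ s) ∈ Gamma δ := by
      intro s hs r hr hsr
      have hrev := isGeodesic_reverse hγ
      have h01 : ((fun s => γ (1 - s)) 0, (fun s => γ (1 - s)) 1) ∈ Gamma δ := by
        simp only
        rw [show (1:ℝ) - 0 = 1 by norm_num, show (1:ℝ) - 1 = 0 by norm_num]
        exact hΓ10
      have hseg := gamma_geodesic_segment hu hrev h01 (s := 1 - r) (t := 1 - s)
        ⟨by linarith [hr.2], by linarith [hr.1]⟩ ⟨by linarith [hs.2], by linarith [hs.1]⟩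
        (by linarith)
      rw [show (1:ℝ) - (1 - r) = r by ring, show (1:ℝ) - (1 - s) = s by ring] at hseg
      exact hseg
    have hdist : ∀ s ∈ Set.Icc (0:ℝ) 1, ∀ r ∈ Set.Icc (0:ℝ) 1, s ≤ r →
        dist (γ s) (γ r) = (r - s) * dist (γ 0) (γ 1) := by
      intro s hs r hr hsr
      rw [hγ s hs r hr, abs_of_nonpos (by linarith : s - r ≤ 0)]
      ring
    have hδγ : ∀ s ∈ Set.Icc (0:ℝ) 1, δ (γ s) = s * dist (γ 0) (γ 1) := by
      intro s hs
      have h2 : δ (γ 1) - δ (γ s) = dist (γ 1) (γ s) := hbar s hs 1 h1I hs.2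
      rw [dist_comm, hdist s hs 1 h1I hs.2] at h2
      linarith [hγ1']
    have hmemΩ : ∀ s ∈ Set.Ioo (0:ℝ) 1, γ s ∈ Ω := by
      intro s hs
      apply mem_of_signedDist_pos (Ω := Ω)
      rw [← hδdef, hδγ s ⟨hs.1.le, hs.2.le⟩]
      exact mul_pos hs.1 hD0
    have hTnbγ : ∀ s ∈ Set.Ioo (0:ℝ) 1, γ s ∈ Tnb δ := by
      intro s hs
      have hsI : s ∈ Set.Icc (0:ℝ) 1 := ⟨hs.1.le, hs.2.le⟩
      have hne0 : γ 0 ≠ γ s := by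
        intro h
        have hd := hdist 0 h0I s hsI hs.1.le
        rw [← h, dist_self] at hd
        nlinarith [mul_pos hs.1 hD0]
      have hne1 : γ 1 ≠ γ s := by
        intro h
        have hd := hdist s hsI 1 h1I hs.2.le
        nth_rewrite 1 [h] at hd
        rw [dist_self] at hd
        nlinarith [mul_pos (by linarith [hs.2] : (0:ℝ) < 1 - s) hD0]
      refine ⟨⟨γ 0, hne0, Or.inl (hbar 0 h0I s hsI hs.1.le)⟩, ?_⟩
      rw [Set.mem_union]
      push_neg
      constructor
      · rintro ⟨-, y, z, h1, h2, hnr⟩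
        exact hnr (no_forward_branch hgeo hnb hu (hbar s hsI 1 h1I hs.2.le) hne1 h1 h2)
      · rintro ⟨-, y, z, h1, h2, hnr⟩
        exact hnr (no_backward_branch hgeo hnb hu (hbar 0 h0I s hsI hs.1.le) hne0 h1 h2)
    have hRx : ∀ s ∈ Set.Ioo (0:ℝ) 1, (x, γ s) ∈ Ru δ := by
      intro s hs
      have hsI : s ∈ Set.Icc (0:ℝ) 1 := ⟨hs.1.le, hs.2.le⟩
      rcases le_total t s with h | h
      · have h' := hbar t htI s hsI h
        rw [hγt] at h'
        exact Or.inr h'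
      · have h' := hbar s hsI t htI h
        rw [hγt] at h'
        exact Or.inl h'
    have hsub : γ '' Set.Ioo 0 1 ⊆ {y | y ∈ Tnb δ ∧ (x, y) ∈ Ru δ} ∩ Ω := by
      rintro _ ⟨s, hs, rfl⟩
      exact ⟨⟨hTnbγ s hs, hRx s hs⟩, hmemΩ s hs⟩
    have himg : Set.Ioo (0:ℝ) (dist (γ 0) (γ 1)) ⊆ δ '' (γ '' Set.Ioo 0 1) := by
      rintro r hr
      have hrI : r / dist (γ 0) (γ 1) ∈ Set.Ioo (0:ℝ) 1 :=
        ⟨div_pos hr.1 hD0, (div_lt_one hD0).2 hr.2⟩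
      refine ⟨γ (r / dist (γ 0) (γ 1)), ⟨r / dist (γ 0) (γ 1), hrI, rfl⟩, ?_⟩
      rw [hδγ _ ⟨hrI.1.le, hrI.2.le⟩]
      field_simp
    calc ENNReal.ofReal ε ≤ ENNReal.ofReal (dist (γ 0) (γ 1)) :=
          ENNReal.ofReal_le_ofReal hεD
      _ = volume (Set.Ioo (0:ℝ) (dist (γ 0) (γ 1))) := by rw [Real.volume_Ioo, sub_zero]
      _ = MeasureTheory.Measure.hausdorffMeasure 1 (Set.Ioo (0:ℝ) (dist (γ 0) (γ 1))) := by
          rw [MeasureTheory.hausdorffMeasure_real]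
      _ ≤ MeasureTheory.Measure.hausdorffMeasure 1 (δ '' (γ '' Set.Ioo 0 1)) :=
          measure_mono himg
      _ ≤ MeasureTheory.Measure.hausdorffMeasure 1
            (δ '' ({y | y ∈ Tnb δ ∧ (x, y) ∈ Ru δ} ∩ Ω)) :=
          measure_mono (Set.image_mono hsub)
      _ ≤ MeasureTheory.Measure.hausdorffMeasure 1
            ({y | y ∈ Tnb δ ∧ (x, y) ∈ Ru δ} ∩ Ω) := by
          have hl := (signedDist_lipschitzWith hgeo hΩ).hausdorffMeasure_image_le
            (zero_le_one (α := ℝ)) ({y | y ∈ Tnb δ ∧ (x, y) ∈ Ru δ} ∩ Ω)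
          simpa using hl
end

section
/- Let (X,d) be a geodesic non-branching metric space and let u : X → ℝ be 1-Lipschitz. Let γ : [0,1] → X be a geodesic with u(γ_0) − u(γ_1) = d(γ_0,γ_1) > 0. Then every interior point of γ lies in the non-branched transport set: γ_t ∈ T_u^{nb} for every t ∈ (0,1). -/
open Metric Set Filter MeasureTheory

variable {X : Type*}

section Helpers

variable [MetricSpace X] {u : X → ℝ}

lemma lip_sub (hu : LipschitzWith 1 u) (x y : X) : u x - u y ≤ dist x y := by
  have h := hu.dist_le_mul x y
  simp only [NNReal.coe_one, one_mul, Real.dist_eq] at h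
  exact (le_abs_self _).trans h

lemma geod_u (hu : LipschitzWith 1 u) {σ : ℝ → X} (hσ : IsGeodesic σ)
    (hg : (σ 0, σ 1) ∈ Gamma u) {s t : ℝ} (hs : s ∈ Set.Icc (0:ℝ) 1)
    (ht : t ∈ Set.Icc (0:ℝ) 1) (hst : s ≤ t) :
    u (σ s) - u (σ t) = (t - s) * dist (σ 0) (σ 1) := by
  have h0 : (0:ℝ) ∈ Set.Icc (0:ℝ) 1 := ⟨le_refl 0, zero_le_one⟩
  have h1 : (1:ℝ) ∈ Set.Icc (0:ℝ) 1 := ⟨zero_le_one, le_refl 1⟩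
  have e1 : dist (σ 0) (σ s) = s * dist (σ 0) (σ 1) := by
    rw [hσ 0 h0 s hs, zero_sub, abs_neg, abs_of_nonneg hs.1]
  have e2 : dist (σ s) (σ t) = (t - s) * dist (σ 0) (σ 1) := by
    rw [hσ s hs t ht, abs_sub_comm, abs_of_nonneg (sub_nonneg.2 hst)]
  have e3 : dist (σ t) (σ 1) = (1 - t) * dist (σ 0) (σ 1) := by
    rw [hσ t ht 1 h1, abs_sub_comm, abs_of_nonneg (sub_nonneg.2 ht.2)]
  have hgg : u (σ 0) - u (σ 1) = dist (σ 0) (σ 1) := hg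
  have l1 := lip_sub hu (σ 0) (σ s)
  have l2 := lip_sub hu (σ s) (σ t)
  have l3 := lip_sub hu (σ t) (σ 1)
  rw [e1] at l1; rw [e2] at l2; rw [e3] at l3
  linarith

lemma isGeodesic_of_lip (hu : LipschitzWith 1 u) {η : ℝ → X} {L : ℝ}
    (hval : ∀ r ∈ Set.Icc (0:ℝ) 1, u (η 0) - u (η r) = r * L)
    (hdist : ∀ s ∈ Set.Icc (0:ℝ) 1, ∀ t ∈ Set.Icc (0:ℝ) 1, s ≤ t →
      dist (η s) (η t) ≤ (t - s) * L) :
    IsGeodesic η := by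
  have key : ∀ s ∈ Set.Icc (0:ℝ) 1, ∀ t ∈ Set.Icc (0:ℝ) 1, s ≤ t →
      dist (η s) (η t) = (t - s) * L := by
    intro s hs t ht hst
    refine le_antisymm (hdist s hs t ht hst) ?_
    have hv : u (η s) - u (η t) = (t - s) * L := by
      have h1 := hval s hs; have h2 := hval t ht; linarith
    calc (t - s) * L = u (η s) - u (η t) := hv.symm
      _ ≤ dist (η s) (η t) := lip_sub hu _ _
  have hL : dist (η 0) (η 1) = L := by
    have := key 0 ⟨le_refl 0, zero_le_one⟩ 1 ⟨zero_le_one, le_refl 1⟩ zero_le_one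
    simpa using this
  intro s hs t ht
  rcases le_total s t with h | h
  · rw [key s hs t ht h, hL, abs_sub_comm, abs_of_nonneg (sub_nonneg.2 h)]
  · rw [dist_comm, key t ht s hs h, hL, abs_of_nonneg (sub_nonneg.2 h)]
lemma concat_geod (hu : LipschitzWith 1 u) {τ₁ τ₂ : ℝ → X} (h1 : IsGeodesic τ₁)
    (h2 : IsGeodesic τ₂) (g1 : (τ₁ 0, τ₁ 1) ∈ Gamma u) (g2 : (τ₂ 0, τ₂ 1) ∈ Gamma u)
    (hjoin : τ₁ 1 = τ₂ 0) {c a : ℝ} (hc : dist (τ₁ 0) (τ₁ 1) = c)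
    (ha : dist (τ₂ 0) (τ₂ 1) = a) (hc0 : 0 < c) (ha0 : 0 < a) :
    IsGeodesic (fun r => if r ≤ c/(c+a) then τ₁ (r * ((c+a)/c))
      else τ₂ ((r - c/(c+a)) * ((c+a)/a))) := by
  have hca : 0 < c + a := by linarith
  have hlam0 : 0 < c/(c+a) := div_pos hc0 hca
  have hlam1 : c/(c+a) < 1 := by rw [div_lt_one hca]; linarith
  have hlc : c/(c+a) * (c+a) = c := div_mul_cancel₀ c hca.ne'
  have h0mem : (0:ℝ) ∈ Set.Icc (0:ℝ) 1 := ⟨le_refl 0, zero_le_one⟩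
  have h1mem : (1:ℝ) ∈ Set.Icc (0:ℝ) 1 := ⟨zero_le_one, le_refl 1⟩
  -- membership helpers
  have mem1 : ∀ r : ℝ, 0 ≤ r → r ≤ c/(c+a) → r * ((c+a)/c) ∈ Set.Icc (0:ℝ) 1 := by
    intro r hr0 hr1
    constructor
    · positivity
    · have := mul_le_mul_of_nonneg_right hr1 (le_of_lt (div_pos hca hc0))
      have e : c/(c+a) * ((c+a)/c) = 1 := by field_simp
      linarith
  have mem2 : ∀ r : ℝ, c/(c+a) ≤ r → r ≤ 1 → (r - c/(c+a)) * ((c+a)/a) ∈ Set.Icc (0:ℝ) 1 := by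
    intro r hr0 hr1
    constructor
    · have : 0 ≤ r - c/(c+a) := by linarith
      positivity
    · have h : r - c/(c+a) ≤ a/(c+a) := by
        have : a/(c+a) = 1 - c/(c+a) := by field_simp; ring
        linarith
      have := mul_le_mul_of_nonneg_right h (le_of_lt (div_pos hca ha0))
      have e : a/(c+a) * ((c+a)/a) = 1 := by field_simp
      linarith
  -- u values along τ₁ and τ₂
  have uτ₁ : ∀ q ∈ Set.Icc (0:ℝ) 1, u (τ₁ 0) - u (τ₁ q) = q * c := by
    intro q hq
    have := geod_u hu h1 g1 h0mem hq hq.1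
    rw [hc] at this; linarith [this]
  have uτ₂ : ∀ q ∈ Set.Icc (0:ℝ) 1, u (τ₂ 0) - u (τ₂ q) = q * a := by
    intro q hq
    have := geod_u hu h2 g2 h0mem hq hq.1
    rw [ha] at this; linarith [this]
  have uc : u (τ₁ 0) - u (τ₂ 0) = c := by
    have h' : u (τ₁ 0) - u (τ₁ 1) = dist (τ₁ 0) (τ₁ 1) := g1
    rw [hc] at h'
    rw [← hjoin]; exact h'
  -- value of η at 0
  have hη0 : (if (0:ℝ) ≤ c/(c+a) then τ₁ (0 * ((c+a)/c))
      else τ₂ ((0 - c/(c+a)) * ((c+a)/a))) = τ₁ 0 := by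
    rw [if_pos (le_of_lt hlam0), zero_mul]
  refine isGeodesic_of_lip hu (L := c + a) ?_ ?_
  · intro r hr
    simp only [hη0]
    by_cases h : r ≤ c/(c+a)
    · simp only [if_pos h]
      rw [uτ₁ _ (mem1 r hr.1 h)]
      field_simp
    · simp only [if_neg h]
      push_neg at h
      have hm := mem2 r (le_of_lt h) hr.2
      have := uτ₂ _ hm
      calc u (τ₁ 0) - u (τ₂ ((r - c/(c+a)) * ((c+a)/a)))
          = (u (τ₁ 0) - u (τ₂ 0)) + (u (τ₂ 0) - u (τ₂ ((r - c/(c+a)) * ((c+a)/a)))) := by ring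
        _ = c + (r - c/(c+a)) * ((c+a)/a) * a := by rw [uc, this]
        _ = r * (c+a) := by
            rw [mul_assoc, div_mul_cancel₀ _ ha0.ne', sub_mul, hlc]; ring
  · intro s hs t ht hst
    by_cases h1s : s ≤ c/(c+a) <;> by_cases h1t : t ≤ c/(c+a)
    · -- both in first piece
      simp only [if_pos h1s, if_pos h1t]
      have := h1 _ (mem1 s hs.1 h1s) _ (mem1 t ht.1 h1t)
      rw [this, hc, ← sub_mul, abs_mul, abs_of_nonneg (le_of_lt (div_pos hca hc0))]
      have : |s - t| = t - s := by rw [abs_sub_comm, abs_of_nonneg (sub_nonneg.2 hst)]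
      rw [this]
      rw [mul_assoc, div_mul_cancel₀ _ hc0.ne']
    · -- s in first, t in second
      simp only [if_pos h1s, if_neg h1t]
      push_neg at h1t
      have hd1 : dist (τ₁ (s * ((c+a)/c))) (τ₁ 1) = (c/(c+a) - s) * (c+a) := by
        have := h1 _ (mem1 s hs.1 h1s) 1 h1mem
        rw [this, hc, abs_sub_comm, abs_of_nonneg]
        · field_simp
        · have e : c/(c+a) * ((c+a)/c) = 1 := by field_simp
          have := mul_le_mul_of_nonneg_right h1s (le_of_lt (div_pos hca hc0))
          linarith
      have hd2 : dist (τ₂ 0) (τ₂ ((t - c/(c+a)) * ((c+a)/a))) = (t - c/(c+a)) * (c+a) := by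
        have hm := mem2 t (le_of_lt h1t) ht.2
        have := h2 0 h0mem _ hm
        rw [this, ha, zero_sub, abs_neg, abs_of_nonneg hm.1]
        field_simp
      calc dist (τ₁ (s * ((c+a)/c))) (τ₂ ((t - c/(c+a)) * ((c+a)/a)))
          ≤ dist (τ₁ (s * ((c+a)/c))) (τ₁ 1) + dist (τ₁ 1) (τ₂ ((t - c/(c+a)) * ((c+a)/a))) :=
            dist_triangle _ _ _
        _ = (c/(c+a) - s) * (c+a) + (t - c/(c+a)) * (c+a) := by rw [hd1, hjoin, hd2]
        _ = (t - s) * (c+a) := by ring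
    · exact (h1s (hst.trans h1t)).elim
    · -- both in second piece
      simp only [if_neg h1s, if_neg h1t]
      push_neg at h1s h1t
      have hms := mem2 s (le_of_lt h1s) hs.2
      have hmt := mem2 t (le_of_lt h1t) ht.2
      have := h2 _ hms _ hmt
      rw [this, ha, ← sub_mul, abs_mul, abs_of_nonneg (le_of_lt (div_pos hca ha0))]
      rw [show s - c/(c+a) - (t - c/(c+a)) = s - t from by ring]
      have e : |s - t| = t - s := by rw [abs_sub_comm, abs_of_nonneg (sub_nonneg.2 hst)]
      rw [e, mul_assoc, div_mul_cancel₀ _ ha0.ne']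
lemma key' (hgeo : GeodesicSpace' X) (hnb : NonBranching X) (hu : LipschitzWith 1 u)
    {p x y z : X} (hpx : (p, x) ∈ Gamma u) (hpne : p ≠ x)
    (hy : (x, y) ∈ Gamma u) (hz : (x, z) ∈ Gamma u) (hab : dist x y ≤ dist x z) :
    (y, z) ∈ Gamma u := by
  rcases eq_or_ne x y with rfl | hxy
  · exact hz
  have ha0 : 0 < dist x y := dist_pos.2 hxy
  have hb0 : 0 < dist x z := lt_of_lt_of_le ha0 hab
  have hc0 : 0 < dist p x := dist_pos.2 hpne
  obtain ⟨τ₁, hτ₁, hτ₁0, hτ₁1⟩ := hgeo p x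
  obtain ⟨τ₂, hτ₂, hτ₂0, hτ₂1⟩ := hgeo x y
  obtain ⟨σ, hσ, hσ0, hσ1⟩ := hgeo x z
  set a := dist x y with hadef
  set b := dist x z with hbdef
  set c := dist p x with hcdef
  set σ' := fun r : ℝ => σ (r * (a/b)) with hσ'def
  have h0mem : (0:ℝ) ∈ Set.Icc (0:ℝ) 1 := ⟨le_refl 0, zero_le_one⟩
  have h1mem : (1:ℝ) ∈ Set.Icc (0:ℝ) 1 := ⟨zero_le_one, le_refl 1⟩
  have hab1 : a / b ∈ Set.Icc (0:ℝ) 1 := ⟨by positivity, (div_le_one hb0).2 hab⟩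
  have hσ'mem : ∀ r ∈ Set.Icc (0:ℝ) 1, r * (a/b) ∈ Set.Icc (0:ℝ) 1 := by
    intro r hr
    constructor
    · exact mul_nonneg hr.1 hab1.1
    · calc r * (a/b) ≤ 1 * (a/b) := mul_le_mul_of_nonneg_right hr.2 hab1.1
        _ ≤ 1 := by rw [one_mul]; exact hab1.2
  have dσ : dist (σ 0) (σ 1) = b := by rw [hσ0, hσ1]
  have hσ'01 : dist (σ' 0) (σ' 1) = a := by
    show dist (σ (0 * (a/b))) (σ (1 * (a/b))) = a
    rw [zero_mul, one_mul, hσ 0 h0mem (a/b) hab1, dσ, zero_sub, abs_neg,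
      abs_of_nonneg hab1.1, div_mul_cancel₀ _ hb0.ne']
  have hσ'geo : IsGeodesic σ' := by
    intro s hs t ht
    show dist (σ (s * (a/b))) (σ (t * (a/b))) = |s - t| * dist (σ' 0) (σ' 1)
    rw [hσ'01, hσ _ (hσ'mem s hs) _ (hσ'mem t ht), dσ, ← sub_mul, abs_mul,
      abs_of_nonneg hab1.1, mul_assoc, div_mul_cancel₀ _ hb0.ne']
  have hσΓ : (σ 0, σ 1) ∈ Gamma u := by rw [hσ0, hσ1]; exact hz
  have hσ'Γ : (σ' 0, σ' 1) ∈ Gamma u := by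
    show u (σ (0 * (a/b))) - u (σ (1 * (a/b))) = dist (σ' 0) (σ' 1)
    rw [hσ'01, zero_mul, one_mul, geod_u hu hσ hσΓ h0mem hab1 hab1.1, dσ, sub_zero,
      div_mul_cancel₀ _ hb0.ne']
  have gτ₁ : (τ₁ 0, τ₁ 1) ∈ Gamma u := by rw [hτ₁0, hτ₁1]; exact hpx
  have gτ₂ : (τ₂ 0, τ₂ 1) ∈ Gamma u := by rw [hτ₂0, hτ₂1]; exact hy
  have dτ₁ : dist (τ₁ 0) (τ₁ 1) = c := by rw [hτ₁0, hτ₁1]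
  have dτ₂ : dist (τ₂ 0) (τ₂ 1) = a := by rw [hτ₂0, hτ₂1]
  have hjoin1 : τ₁ 1 = τ₂ 0 := by rw [hτ₁1, hτ₂0]
  have hjoin2 : τ₁ 1 = σ' 0 := by
    show τ₁ 1 = σ (0 * (a/b)); rw [zero_mul, hσ0, hτ₁1]
  have hη := concat_geod hu hτ₁ hτ₂ gτ₁ gτ₂ hjoin1 dτ₁ dτ₂ hc0 ha0
  have hη' := concat_geod hu hτ₁ hσ'geo gτ₁ hσ'Γ hjoin2 dτ₁ hσ'01 hc0 ha0
  have hca : 0 < c + a := by linarith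
  have hlam : c/(c+a) ∈ Set.Ioo (0:ℝ) 1 :=
    ⟨div_pos hc0 hca, (div_lt_one hca).2 (by linarith)⟩
  have hagree : ∀ s ∈ Set.Icc (0:ℝ) (c/(c+a)),
      (fun r => if r ≤ c/(c+a) then τ₁ (r * ((c+a)/c))
        else τ₂ ((r - c/(c+a)) * ((c+a)/a))) s =
      (fun r => if r ≤ c/(c+a) then τ₁ (r * ((c+a)/c))
        else σ' ((r - c/(c+a)) * ((c+a)/a))) s := by
    intro s hs
    simp only [if_pos hs.2]
  have h11 := hnb _ _ hη hη' (c/(c+a)) hlam hagree 1 h1mem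
  have hnl : ¬ (1:ℝ) ≤ c/(c+a) := not_le.2 hlam.2
  simp only [if_neg hnl] at h11
  have harg : ((1:ℝ) - c/(c+a)) * ((c+a)/a) = 1 := by
    field_simp; ring
  rw [harg] at h11
  -- h11 : τ₂ 1 = σ' 1
  have hyz' : y = σ (a/b) := by
    rw [← hτ₂1, h11]; show σ (1 * (a/b)) = σ (a/b); rw [one_mul]
  have e1 : u (σ (a/b)) - u (σ 1) = (1 - a/b) * b := by
    have := geod_u hu hσ hσΓ hab1 h1mem hab1.2
    rwa [dσ] at this
  have e2 : dist (σ (a/b)) (σ 1) = (1 - a/b) * b := by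
    rw [hσ (a/b) hab1 1 h1mem, dσ, abs_sub_comm, abs_of_nonneg (sub_nonneg.2 hab1.2)]
  show u y - u z = dist y z
  rw [hyz', ← hσ1, e1, e2]

lemma keylem (hgeo : GeodesicSpace' X) (hnb : NonBranching X) (hu : LipschitzWith 1 u)
    {p x y z : X} (hpx : (p, x) ∈ Gamma u) (hpne : p ≠ x)
    (hy : (x, y) ∈ Gamma u) (hz : (x, z) ∈ Gamma u) : (y, z) ∈ Ru u := by
  rcases le_total (dist x y) (dist x z) with h | h
  · exact Set.mem_union_left _ (key' hgeo hnb hu hpx hpne hy hz h)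
  · exact Set.mem_union_right _ (key' hgeo hnb hu hpx hpne hz hy h)

lemma gamma_neg {x y : X} : (x, y) ∈ Gamma u ↔ (y, x) ∈ Gamma (fun w => -u w) := by
  show u x - u y = dist x y ↔ -u y - -u x = dist y x
  rw [dist_comm]
  constructor <;> intro h <;> linarith

end Helpers

/-- interior points of a geodesic along which a 1-Lipschitz
function decreases at unit rate lie in the non-branched transport set. -/
theorem interior_points_in_Tnb
    [MetricSpace X] (hgeo : GeodesicSpace' X) (hnb : NonBranching X)
    (u : X → ℝ) (hu : LipschitzWith 1 u)
    (γ : ℝ → X) (hγ : IsGeodesic γ)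
    (h1 : u (γ 0) - u (γ 1) = dist (γ 0) (γ 1))
    (h2 : 0 < dist (γ 0) (γ 1)) :
    ∀ t ∈ Set.Ioo (0:ℝ) 1, γ t ∈ Tnb u := by
  intro t ht
  obtain ⟨ht0, ht1⟩ := ht
  have h0mem : (0:ℝ) ∈ Set.Icc (0:ℝ) 1 := ⟨le_refl 0, zero_le_one⟩
  have h1mem : (1:ℝ) ∈ Set.Icc (0:ℝ) 1 := ⟨zero_le_one, le_refl 1⟩
  have htmem : t ∈ Set.Icc (0:ℝ) 1 := ⟨le_of_lt ht0, le_of_lt ht1⟩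
  have hγΓ : (γ 0, γ 1) ∈ Gamma u := h1
  have d_t1 : dist (γ t) (γ 1) = (1 - t) * dist (γ 0) (γ 1) := by
    rw [hγ t htmem 1 h1mem, abs_sub_comm, abs_of_nonneg (sub_nonneg.2 (le_of_lt ht1))]
  have d_0t : dist (γ 0) (γ t) = t * dist (γ 0) (γ 1) := by
    rw [hγ 0 h0mem t htmem, zero_sub, abs_neg, abs_of_nonneg (le_of_lt ht0)]
  have g_t1 : (γ t, γ 1) ∈ Gamma u := by
    show u (γ t) - u (γ 1) = dist (γ t) (γ 1)
    rw [d_t1, geod_u hu hγ hγΓ htmem h1mem (le_of_lt ht1)]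
  have g_0t : (γ 0, γ t) ∈ Gamma u := by
    show u (γ 0) - u (γ t) = dist (γ 0) (γ t)
    rw [d_0t]
    have := geod_u hu hγ hγΓ h0mem htmem (le_of_lt ht0)
    rw [sub_zero] at this
    exact this
  have hpos1 : 0 < dist (γ t) (γ 1) := by
    rw [d_t1]; exact mul_pos (by linarith) h2
  have hpos0 : 0 < dist (γ 0) (γ t) := by
    rw [d_0t]; exact mul_pos ht0 h2
  have hne1 : γ 1 ≠ γ t := by
    intro h
    rw [h, dist_self] at hpos1
    exact lt_irrefl _ hpos1
  have hne0 : γ 0 ≠ γ t := by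
    intro h
    rw [h, dist_self] at hpos0
    exact lt_irrefl _ hpos0
  refine ⟨⟨γ 1, hne1, Set.mem_union_left _ g_t1⟩, ?_⟩
  intro hbr
  rcases hbr with h | h
  · obtain ⟨-, y, z, hy, hz, hnr⟩ := h
    exact hnr (keylem hgeo hnb hu g_0t hne0 hy hz)
  · obtain ⟨-, y, z, hy, hz, hnr⟩ := h
    have hv : LipschitzWith 1 (fun w => -u w) := by
      intro a b
      simpa [edist_comm] using hu a b
    have hk := keylem hgeo hnb hv (gamma_neg.1 g_t1) hne1 (gamma_neg.1 hy) (gamma_neg.1 hz)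
    rcases hk with h' | h'
    · exact hnr (Set.mem_union_right _ (gamma_neg.2 h'))
    · exact hnr (Set.mem_union_left _ (gamma_neg.2 h'))
end
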